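/- If G and H are guaranteed scoring games with G ⋡ H, then there exists a guaranteed game X such that Ls(G+X) < 0 < Ls(H+X), and there exists a guaranteed game Y such that Rs(G+Y) < 0 < Rs(H+Y). -/

import Mathlib

/-- A scoring game: `la`/`ra` are the atom values (relevant when the
corresponding option list is empty), `L`/`R` the Left and Right options. -/
inductive SG : Type
  | mk (la ra : ℝ) (L R : List SG) : SG

namespace SG

theorem sizeOf_lt_of_mem {g : SG} {l : List SG} (h : g ∈ l) : sizeOf g < sizeOf l :=
  List.sizeOf_lt_of_mem h

noncomputable instance : DecidableEq SG := Classical.decEq _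

def la : SG → ℝ | mk a _ _ _ => a
def ra : SG → ℝ | mk _ b _ _ => b
def L : SG → List SG | mk _ _ l _ => l
def R : SG → List SG | mk _ _ _ r => r

/-- The list of atom values occurring in atomic followers of a game. -/
def atomList : SG → List ℝ
  | mk a b ls rs =>
    (if ls.isEmpty then [a] else (ls.attach.map (fun x => atomList x.1)).flatten)
    ++ (if rs.isEmpty then [b] else (rs.attach.map (fun x => atomList x.1)).flatten)
decreasing_by all_goals (simp only [SG.mk.sizeOf_spec]; (first | (have := sizeOf_lt_of_mem x.2) | (have := sizeOf_lt_of_mem (by assumption : x ∈ _))); omega)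

/-- The guaranteed condition. -/
def Guaranteed : SG → Prop
  | mk a b ls rs =>
    (∀ x ∈ ls, Guaranteed x) ∧ (∀ x ∈ rs, Guaranteed x) ∧
    (ls = [] → ∀ s ∈ (mk a b ls rs).atomList, a ≤ s) ∧
    (rs = [] → ∀ s ∈ (mk a b ls rs).atomList, s ≤ b)
decreasing_by all_goals (simp only [SG.mk.sizeOf_spec]; (first | (have := sizeOf_lt_of_mem x.2) | (have := sizeOf_lt_of_mem (by assumption : x ∈ _))); omega)

/-- Disjunctive sum. -/
noncomputable def add : SG → SG → SG
  | mk a1 b1 L1 R1, mk a2 b2 L2 R2 =>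
    mk (a1 + a2) (b1 + b2)
      (L1.attach.map (fun x => add x.1 (mk a2 b2 L2 R2))
        ++ L2.attach.map (fun x => add (mk a1 b1 L1 R1) x.1))
      (R1.attach.map (fun x => add x.1 (mk a2 b2 L2 R2))
        ++ R2.attach.map (fun x => add (mk a1 b1 L1 R1) x.1))
termination_by g h => sizeOf g + sizeOf h
decreasing_by all_goals (simp only [SG.mk.sizeOf_spec]; (first | (have := sizeOf_lt_of_mem x.2) | (have := sizeOf_lt_of_mem (by assumption : x ∈ _))); omega)

/-- Left- and Right-stops (as a pair). -/
noncomputable def stops : SG → ℝ × ℝ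
  | mk a b ls rs =>
    (if ls.isEmpty then a else (WithBot.unbotD 0 (ls.attach.map (fun x => (stops x.1).2)).maximum),
     if rs.isEmpty then b else (WithTop.untopD 0 (rs.attach.map (fun x => (stops x.1).1)).minimum))
decreasing_by all_goals (simp only [SG.mk.sizeOf_spec]; (first | (have := sizeOf_lt_of_mem x.2) | (have := sizeOf_lt_of_mem (by assumption : x ∈ _))); omega)

noncomputable def Ls (g : SG) : ℝ := g.stops.1
noncomputable def Rs (g : SG) : ℝ := g.stops.2

/-- The conjugate: interchange Left and Right and negate atoms. -/
noncomputable def conj : SG → SG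
  | mk a b ls rs =>
    mk (-b) (-a) (rs.attach.map (fun x => conj x.1)) (ls.attach.map (fun x => conj x.1))
decreasing_by all_goals (simp only [SG.mk.sizeOf_spec]; (first | (have := sizeOf_lt_of_mem x.2) | (have := sizeOf_lt_of_mem (by assumption : x ∈ _))); omega)

/-- The game ⟨∅^s | ∅^s⟩ of a real number `s`. -/
def num (s : ℝ) : SG := mk s s [] []

/-- The zero game ⟨∅^0 | ∅^0⟩. -/
def zero : SG := num 0

/-- Waiting moves: the image of the Normal-play integer `n`. -/
def wait : ℕ → SG
  | 0 => zero
  | n + 1 => mk 0 0 [wait n] []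

/-- Birthday: the depth of the game tree. -/
def birthday : SG → ℕ
  | mk _ _ ls rs =>
    max (WithBot.unbotD 0 (ls.attach.map (fun x => birthday x.1 + 1)).maximum)
        (WithBot.unbotD 0 (rs.attach.map (fun x => birthday x.1 + 1)).maximum)
decreasing_by all_goals (simp only [SG.mk.sizeOf_spec]; (first | (have := sizeOf_lt_of_mem x.2) | (have := sizeOf_lt_of_mem (by assumption : x ∈ _))); omega)

/-- `Ge G H` is the order `G ≽ H`. -/
def Ge (G H : SG) : Prop :=
  ∀ X : SG, X.Guaranteed → Ls (G.add X) ≥ Ls (H.add X) ∧ Rs (G.add X) ≥ Rs (H.add X)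

/-- Equivalence `G ∼ H`. -/
def Equiv (G H : SG) : Prop := Ge G H ∧ Ge H G

/-- Right's pass-allowed Left-stop `L̲s(G) = min_n Ls(G - n̂)`. -/
noncomputable def lsU (G : SG) : ℝ := ⨅ n : ℕ, Ls (G.add (wait n).conj)

/-- Left's pass-allowed Right-stop `R̄s(G) = max_n Rs(G + n̂)`. -/
noncomputable def rsO (G : SG) : ℝ := ⨆ n : ℕ, Rs (G.add (wait n))

/-- `L̄s(G) = max_n Ls(G + n̂)`. -/
noncomputable def lsO (G : SG) : ℝ := ⨆ n : ℕ, Ls (G.add (wait n))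

/-- `R̲s(G) = min_n Rs(G + n̂)`. -/
noncomputable def rsU (G : SG) : ℝ := ⨅ n : ℕ, Rs (G.add (wait n))

/-- Identity of games: same tree structure (up to reordering of options),
with identical atoms at atomic positions. -/
def Ident : SG → SG → Prop
  | mk a1 b1 L1 R1, mk a2 b2 L2 R2 =>
    (L1 = [] ↔ L2 = []) ∧ (L1 = [] → a1 = a2) ∧
    (R1 = [] ↔ R2 = []) ∧ (R1 = [] → b1 = b2) ∧
    (∀ x ∈ L1, ∃ y : {z // z ∈ L2}, Ident x y.1) ∧
    (∀ y ∈ L2, ∃ x : {z // z ∈ L1}, Ident x.1 y) ∧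
    (∀ x ∈ R1, ∃ y : {z // z ∈ R2}, Ident x y.1) ∧
    (∀ y ∈ R2, ∃ x : {z // z ∈ R1}, Ident x.1 y)
termination_by g h => sizeOf g
decreasing_by all_goals (simp only [SG.mk.sizeOf_spec]; (first | (have := sizeOf_lt_of_mem x.2) | (have := sizeOf_lt_of_mem (by assumption : x ∈ _))); omega)

/-- `Linked H G`: `H` is linked to `G` (by some guaranteed `T`). -/
def Linked (H G : SG) : Prop :=
  ∃ T : SG, T.Guaranteed ∧ Ls (H.add T) < 0 ∧ 0 < Rs (G.add T)

/-- Replace every atom of `G` by `∅^x`. -/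
def subst (v : ℝ) : SG → SG
  | mk _ _ ls rs =>
    mk v v (ls.attach.map (fun x => subst v x.1)) (rs.attach.map (fun x => subst v x.1))
decreasing_by all_goals (simp only [SG.mk.sizeOf_spec]; (first | (have := sizeOf_lt_of_mem x.2) | (have := sizeOf_lt_of_mem (by assumption : x ∈ _))); omega)

/-- The maximum atom value in `G`. -/
noncomputable def maxAtom (G : SG) : ℝ := WithBot.unbotD 0 G.atomList.maximum

/-- The minimum atom value in `G`. -/
noncomputable def minAtom (G : SG) : ℝ := WithTop.untopD 0 G.atomList.minimum

end SG

/-!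
If `G ⋡ H`, some guaranteed `X` has `Ls(G+X) < Ls(H+X)` or `Rs(G+X) < Rs(H+X)`, and adding a
suitable number to `X` puts `0` strictly between the two stops. A separation by Left-stops yields
one by Right-stops: if `Ls(G+X) < 0 < Ls(H+X)`, take `Y = ⟨t | X⟩` with `t` a large number. In
`G+Y` Right moves to `G+X`; in `H+Y` each Right move goes either to `H+X` or to `Hᴿ+Y`, where Left
answers with `Hᴿ+t`, whose Right-stop `Rs(Hᴿ)+t` is positive once `t` exceeds every `-Rs(Hᴿ)`.
The other direction is symmetric.
-/

namespace List

variable {α β : Type*} [LinearOrder α] [LinearOrder β] {l : List α}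

theorem unbotD_maximum_mem (d : α) (h : l ≠ []) : l.maximum.unbotD d ∈ l := by
  obtain ⟨m, hm⟩ := WithBot.ne_bot_iff_exists.1 (maximum_ne_bot_of_ne_nil h)
  rw [← hm, WithBot.unbotD_coe]
  exact maximum_mem hm.symm

theorem untopD_minimum_mem (d : α) (h : l ≠ []) : l.minimum.untopD d ∈ l := by
  obtain ⟨m, hm⟩ := WithTop.ne_top_iff_exists.1 (minimum_ne_top_of_ne_nil h)
  rw [← hm, WithTop.untopD_coe]
  exact minimum_mem hm.symm

theorem le_unbotD_maximum_of_mem {a : α} (d : α) (h : a ∈ l) : a ≤ l.maximum.unbotD d :=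
  (WithBot.le_unbotD_iff (maximum_ne_bot_of_ne_nil (ne_nil_of_mem h))).2 (le_maximum_of_mem' h)

theorem untopD_minimum_le_of_mem {a : α} (d : α) (h : a ∈ l) : l.minimum.untopD d ≤ a :=
  (WithTop.untopD_le_iff (minimum_ne_top_of_ne_nil (ne_nil_of_mem h))).2 (minimum_le_of_mem' h)

theorem unbotD_maximum_map_of_monotone {f : α → β} (hf : Monotone f) (h : l ≠ []) (d : α)
    (d' : β) : (l.map f).maximum.unbotD d' = f (l.maximum.unbotD d) := by
  apply le_antisymm
  · obtain ⟨a, ha, hfa⟩ :=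
      mem_map.1 (unbotD_maximum_mem (l := l.map f) d' (mt map_eq_nil_iff.1 h))
    rw [← hfa]
    exact hf (le_unbotD_maximum_of_mem d ha)
  · exact le_unbotD_maximum_of_mem d' (mem_map_of_mem (unbotD_maximum_mem d h))

theorem untopD_minimum_map_of_monotone {f : α → β} (hf : Monotone f) (h : l ≠ []) (d : α)
    (d' : β) : (l.map f).minimum.untopD d' = f (l.minimum.untopD d) := by
  apply le_antisymm
  · exact untopD_minimum_le_of_mem d' (mem_map_of_mem (untopD_minimum_mem d h))
  · obtain ⟨a, ha, hfa⟩ :=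
      mem_map.1 (untopD_minimum_mem (l := l.map f) d' (mt map_eq_nil_iff.1 h))
    rw [← hfa]
    exact hf (untopD_minimum_le_of_mem d ha)

end List

namespace SG

@[elab_as_elim]
theorem induction {P : SG → Prop}
    (mk : ∀ a b ls rs, (∀ x ∈ ls, P x) → (∀ x ∈ rs, P x) → P (mk a b ls rs)) : ∀ g, P g
  | .mk a b ls rs => mk a b ls rs (fun x _ => induction mk x) (fun x _ => induction mk x)
termination_by g => sizeOf g
decreasing_by all_goals (simp only [SG.mk.sizeOf_spec]; have := sizeOf_lt_of_mem ‹_›; omega)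

@[simp] theorem L_mk (a b : ℝ) (ls rs : List SG) : (mk a b ls rs).L = ls := rfl

@[simp] theorem R_mk (a b : ℝ) (ls rs : List SG) : (mk a b ls rs).R = rs := rfl

theorem add_mk (a b a' b' : ℝ) (ls rs ls' rs' : List SG) :
    (mk a b ls rs).add (mk a' b' ls' rs') =
      mk (a + a') (b + b')
        (ls.map (·.add (mk a' b' ls' rs')) ++ ls'.map (mk a b ls rs).add)
        (rs.map (·.add (mk a' b' ls' rs')) ++ rs'.map (mk a b ls rs).add) := by
  rw [add]
  simp only [List.map_subtype, List.unattach_attach]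

theorem L_add (A B : SG) : (A.add B).L = A.L.map (·.add B) ++ B.L.map A.add := by
  obtain ⟨a, b, ls, rs⟩ := A
  obtain ⟨a', b', ls', rs'⟩ := B
  rw [add_mk]
  rfl

theorem R_add (A B : SG) : (A.add B).R = A.R.map (·.add B) ++ B.R.map A.add := by
  obtain ⟨a, b, ls, rs⟩ := A
  obtain ⟨a', b', ls', rs'⟩ := B
  rw [add_mk]
  rfl

theorem Ls_mk (a b : ℝ) (ls rs : List SG) :
    Ls (mk a b ls rs) = if ls = [] then a else (ls.map Rs).maximum.unbotD 0 := by
  rw [Ls, stops]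
  simp only [List.isEmpty_iff, List.map_subtype, List.unattach_attach]
  rfl

theorem Rs_mk (a b : ℝ) (ls rs : List SG) :
    Rs (mk a b ls rs) = if rs = [] then b else (rs.map Ls).minimum.untopD 0 := by
  rw [Rs, stops]
  simp only [List.isEmpty_iff, List.map_subtype, List.unattach_attach]
  rfl

theorem atomList_mk (a b : ℝ) (ls rs : List SG) :
    (mk a b ls rs).atomList =
      (if ls = [] then [a] else (ls.map atomList).flatten)
      ++ (if rs = [] then [b] else (rs.map atomList).flatten) := by
  rw [atomList]
  simp only [List.isEmpty_iff, List.map_subtype, List.unattach_attach]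

theorem Rs_le_Ls_of_mem_L {A x : SG} (hx : x ∈ A.L) : Rs x ≤ Ls A := by
  obtain ⟨a, b, ls, rs⟩ := A
  rw [Ls_mk, if_neg (List.ne_nil_of_mem (l := ls) hx)]
  exact List.le_unbotD_maximum_of_mem 0 (List.mem_map_of_mem hx)

theorem Rs_le_Ls_of_mem_R {A x : SG} (hx : x ∈ A.R) : Rs A ≤ Ls x := by
  obtain ⟨a, b, ls, rs⟩ := A
  rw [Rs_mk, if_neg (List.ne_nil_of_mem (l := rs) hx)]
  exact List.untopD_minimum_le_of_mem 0 (List.mem_map_of_mem hx)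

theorem Ls_lt_of_forall_mem_L {A : SG} {c : ℝ} (hne : A.L ≠ []) (h : ∀ x ∈ A.L, Rs x < c) :
    Ls A < c := by
  obtain ⟨a, b, ls, rs⟩ := A
  rw [Ls_mk, if_neg (show ls ≠ [] from hne)]
  obtain ⟨x, hx, hmax⟩ :=
    List.mem_map.1 (List.unbotD_maximum_mem (l := ls.map Rs) 0 (mt List.map_eq_nil_iff.1 hne))
  exact hmax ▸ h x hx

theorem lt_Rs_of_forall_mem_R {A : SG} {c : ℝ} (hne : A.R ≠ []) (h : ∀ x ∈ A.R, c < Ls x) :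
    c < Rs A := by
  obtain ⟨a, b, ls, rs⟩ := A
  rw [Rs_mk, if_neg (show rs ≠ [] from hne)]
  obtain ⟨x, hx, hmin⟩ :=
    List.mem_map.1 (List.untopD_minimum_mem (l := rs.map Ls) 0 (mt List.map_eq_nil_iff.1 hne))
  exact hmin ▸ h x hx

theorem mk_add_num (a b : ℝ) (ls rs : List SG) (s : ℝ) :
    (mk a b ls rs).add (num s) =
      mk (a + s) (b + s) (ls.map (·.add (num s))) (rs.map (·.add (num s))) := by
  simp [num, add_mk]

theorem add_add_num (s : ℝ) (A B : SG) : A.add (B.add (num s)) = (A.add B).add (num s) := by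
  induction A using SG.induction generalizing B with
  | mk a b ls rs ihl ihr =>
  induction B using SG.induction with
  | mk a' b' ls' rs' ihl' ihr' =>
  rw [mk_add_num a' b' ls' rs', add_mk, add_mk, mk_add_num, ← mk_add_num a' b' ls' rs']
  simp only [List.map_append, List.map_map, add_assoc]
  congr 2
  · exact List.map_congr_left fun x hx => ihl x hx _
  · exact List.map_congr_left fun x hx => ihl' x hx
  · exact List.map_congr_left fun x hx => ihr x hx _
  · exact List.map_congr_left fun x hx => ihr' x hx

theorem stops_add_num (s : ℝ) (A : SG) : (A.add (num s)).stops = (Ls A + s, Rs A + s) := by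
  induction A using SG.induction with
  | mk a b ls rs ihl ihr =>
  have hmono : Monotone (· + s) := monotone_id.add_const s
  refine Prod.ext ?_ ?_
  · change Ls _ = _
    rw [mk_add_num, Ls_mk, Ls_mk]
    rcases eq_or_ne ls [] with rfl | hne
    · simp
    · rw [if_neg (by simpa using hne), if_neg hne, List.map_map,
        ← List.unbotD_maximum_map_of_monotone hmono (mt List.map_eq_nil_iff.1 hne), List.map_map]
      exact congrArg _ (congrArg _ (List.map_congr_left fun x hx => congrArg Prod.snd (ihl x hx)))
  · change Rs _ = _
    rw [mk_add_num, Rs_mk, Rs_mk]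
    rcases eq_or_ne rs [] with rfl | hne
    · simp
    · rw [if_neg (by simpa using hne), if_neg hne, List.map_map,
        ← List.untopD_minimum_map_of_monotone hmono (mt List.map_eq_nil_iff.1 hne), List.map_map]
      exact congrArg _ (congrArg _ (List.map_congr_left fun x hx => congrArg Prod.fst (ihr x hx)))

theorem Ls_add_num (s : ℝ) (A : SG) : Ls (A.add (num s)) = Ls A + s :=
  congrArg Prod.fst (stops_add_num s A)

theorem Rs_add_num (s : ℝ) (A : SG) : Rs (A.add (num s)) = Rs A + s :=
  congrArg Prod.snd (stops_add_num s A)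

theorem atomList_add_num (s : ℝ) (A : SG) :
    (A.add (num s)).atomList = A.atomList.map (· + s) := by
  induction A using SG.induction with
  | mk a b ls rs ihl ihr =>
  rw [mk_add_num, atomList_mk, atomList_mk, List.map_append]
  simp only [List.map_eq_nil_iff]
  congr 1
  · split_ifs
    · rfl
    · rw [List.map_flatten, List.map_map, List.map_map]
      exact congrArg _ (List.map_congr_left ihl)
  · split_ifs
    · rfl
    · rw [List.map_flatten, List.map_map, List.map_map]
      exact congrArg _ (List.map_congr_left ihr)

theorem guaranteed_num (s : ℝ) : (num s).Guaranteed := by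
  rw [num, Guaranteed, atomList_mk]
  simp

theorem guaranteed_mk_of_ne_nil {a b : ℝ} {ls rs : List SG} (hls : ls ≠ []) (hrs : rs ≠ [])
    (hl : ∀ x ∈ ls, x.Guaranteed) (hr : ∀ x ∈ rs, x.Guaranteed) :
    (mk a b ls rs).Guaranteed := by
  rw [Guaranteed]
  exact ⟨hl, hr, fun h => absurd h hls, fun h => absurd h hrs⟩

theorem Guaranteed.add_num {A : SG} (hA : A.Guaranteed) (s : ℝ) : (A.add (num s)).Guaranteed := by
  induction A using SG.induction with
  | mk a b ls rs ihl ihr =>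
  rw [Guaranteed] at hA
  obtain ⟨hl, hr, ha, hb⟩ := hA
  rw [mk_add_num, Guaranteed, ← mk_add_num, atomList_add_num]
  simp only [List.forall_mem_map, List.map_eq_nil_iff, add_le_add_iff_right]
  exact ⟨fun x hx => ihl x hx (hl x hx), fun x hx => ihr x hx (hr x hx), ha, hb⟩

theorem exists_Ls_separation {G H X : SG} (hX : X.Guaranteed) (h : Ls (G.add X) < Ls (H.add X)) :
    ∃ X' : SG, X'.Guaranteed ∧ Ls (G.add X') < 0 ∧ 0 < Ls (H.add X') := by
  set s := -(Ls (G.add X) + Ls (H.add X)) / 2 with hs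
  refine ⟨X.add (num s), hX.add_num s, ?_, ?_⟩ <;> rw [add_add_num, Ls_add_num] <;> linarith

theorem exists_Rs_separation {G H X : SG} (hX : X.Guaranteed) (h : Rs (G.add X) < Rs (H.add X)) :
    ∃ X' : SG, X'.Guaranteed ∧ Rs (G.add X') < 0 ∧ 0 < Rs (H.add X') := by
  set s := -(Rs (G.add X) + Rs (H.add X)) / 2 with hs
  refine ⟨X.add (num s), hX.add_num s, ?_, ?_⟩ <;> rw [add_add_num, Rs_add_num] <;> linarith

theorem exists_Rs_separation_of_Ls_separation {G H X : SG} (hX : X.Guaranteed)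
    (hG : Ls (G.add X) < 0) (hH : 0 < Ls (H.add X)) :
    ∃ Y : SG, Y.Guaranteed ∧ Rs (G.add Y) < 0 ∧ 0 < Rs (H.add Y) := by
  obtain ⟨m, hm⟩ := (H.R.finite_toSet.image Rs).bddBelow
  set Y := mk 0 0 [num (1 - m)] [X]
  have hY : Y.Guaranteed :=
    guaranteed_mk_of_ne_nil (by simp) (by simp)
      (by simpa using guaranteed_num _) (by simpa using hX)
  refine ⟨Y, hY, ?_, ?_⟩
  · calc Rs (G.add Y) ≤ Ls (G.add X) := Rs_le_Ls_of_mem_R (by simp [R_add, Y])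
      _ < 0 := hG
  · refine lt_Rs_of_forall_mem_R (by simp [R_add, Y]) fun z hz => ?_
    simp only [R_add, Y, R_mk, List.mem_append, List.mem_map, List.mem_singleton] at hz
    rcases hz with ⟨hr, hr_mem, rfl⟩ | ⟨_, rfl, rfl⟩
    · calc 0 < Rs hr + (1 - m) := by linarith [hm ⟨hr, hr_mem, rfl⟩]
        _ = Rs (hr.add (num (1 - m))) := (Rs_add_num _ _).symm
        _ ≤ Ls (hr.add Y) := Rs_le_Ls_of_mem_L (by simp [L_add, Y])
    · exact hH

theorem exists_Ls_separation_of_Rs_separation {G H Y : SG} (hY : Y.Guaranteed)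
    (hG : Rs (G.add Y) < 0) (hH : 0 < Rs (H.add Y)) :
    ∃ X : SG, X.Guaranteed ∧ Ls (G.add X) < 0 ∧ 0 < Ls (H.add X) := by
  obtain ⟨M, hM⟩ := (G.L.finite_toSet.image Ls).bddAbove
  set X := mk 0 0 [Y] [num (-1 - M)]
  have hX : X.Guaranteed :=
    guaranteed_mk_of_ne_nil (by simp) (by simp)
      (by simpa using hY) (by simpa using guaranteed_num _)
  refine ⟨X, hX, ?_, ?_⟩
  · refine Ls_lt_of_forall_mem_L (by simp [L_add, X]) fun z hz => ?_
    simp only [L_add, X, L_mk, List.mem_append, List.mem_map, List.mem_singleton] at hz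
    rcases hz with ⟨gl, gl_mem, rfl⟩ | ⟨_, rfl, rfl⟩
    · calc Rs (gl.add X) ≤ Ls (gl.add (num (-1 - M))) := Rs_le_Ls_of_mem_R (by simp [R_add, X])
        _ = Ls gl + (-1 - M) := Ls_add_num _ _
        _ < 0 := by linarith [hM ⟨gl, gl_mem, rfl⟩]
    · exact hG
  · calc 0 < Rs (H.add Y) := hH
      _ ≤ Ls (H.add X) := Rs_le_Ls_of_mem_L (by simp [L_add, X])

theorem not_ge_separation_general (G H : SG) (h : ¬ G.Ge H) :
    (∃ X : SG, X.Guaranteed ∧ Ls (G.add X) < 0 ∧ 0 < Ls (H.add X)) ∧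
    (∃ Y : SG, Y.Guaranteed ∧ Rs (G.add Y) < 0 ∧ 0 < Rs (H.add Y)) := by
  obtain ⟨X, hX, hLR⟩ : ∃ X : SG, X.Guaranteed ∧
      (Ls (G.add X) < Ls (H.add X) ∨ Rs (G.add X) < Rs (H.add X)) := by
    simpa only [Ge, ge_iff_le, not_forall, not_and_or, not_le, exists_prop] using h
  rcases hLR with hL | hR
  · obtain ⟨X', hX', hGX, hHX⟩ := exists_Ls_separation hX hL
    exact ⟨⟨X', hX', hGX, hHX⟩, exists_Rs_separation_of_Ls_separation hX' hGX hHX⟩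
  · obtain ⟨Y, hY, hGY, hHY⟩ := exists_Rs_separation hX hR
    exact ⟨exists_Ls_separation_of_Rs_separation hY hGY hHY, ⟨Y, hY, hGY, hHY⟩⟩

/-- If `G ⋡ H` then there are guaranteed `X`, `Y` with
`Ls(G+X) < 0 < Ls(H+X)` and `Rs(G+Y) < 0 < Rs(H+Y)`. -/
theorem not_ge_separation (G H : SG) (hG : G.Guaranteed) (hH : H.Guaranteed)
    (h : ¬ G.Ge H) :
    (∃ X : SG, X.Guaranteed ∧ Ls (G.add X) < 0 ∧ 0 < Ls (H.add X)) ∧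
    (∃ Y : SG, Y.Guaranteed ∧ Rs (G.add Y) < 0 ∧ 0 < Rs (H.add Y)) :=
  not_ge_separation_general G H h

end SG
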